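/- Let A ∈ ℕ₀^{𝒜×X} be a sum-formula instance of a reaction network with stoichiometric matrix S such that im Aᵀ = ker Sᵀ. Then x and y are obligatory isomers if and only if A_{ax} = A_{ay} for all a ∈ 𝒜. If only im Aᵀ ⊆ ker Sᵀ, then obligatory isomery implies equal columns. -/

import Mathlib

/-!
If `S v = k • (e_y - e_x)` with `k ≠ 0`, then every `m` with `mᵀ S = 0` satisfies
`k (m_y - m_x) = mᵀ S v = 0`; the rows of `A` are such vectors, so their columns at `x` and `y`
agree. Conversely, if the rows of `A` span `ker Sᵀ`, equal columns give `m_x = m_y` on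
`ker Sᵀ = (im S)^⊥`, so `e_y - e_x ∈ im S` over `ℚ`, and clearing denominators yields an
integer `v` with `S v = k • (e_y - e_x)`, `k > 0`.
-/

open Matrix

theorem Pi.eq_single_sub_single_iff {X G : Type*} [AddGroup G] [DecidableEq X] {f : X → G}
    {x y : X} (hxy : x ≠ y) {a : G} :
    f = Pi.single y a - Pi.single x a ↔
      f x = -a ∧ f y = a ∧ ∀ z, z ≠ x → z ≠ y → f z = 0 := by
  constructor
  · rintro rfl
    exact ⟨by simp [hxy], by simp [hxy], fun z hzx hzy => by simp [hzx, hzy]⟩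
  · rintro ⟨hx, hy, hz⟩
    ext z
    by_cases hzx : z = x
    · subst hzx; simp [hxy, hx]
    by_cases hzy : z = y
    · subst hzy; simp [hzx, hy]
    simp [hzx, hzy, hz z hzx hzy]

theorem Rat.exists_nat_mul_eq_intCast {ι : Type*} [Fintype ι] (u : ι → ℚ) :
    ∃ d : ℕ, 0 < d ∧ ∃ n : ι → ℤ, ∀ i, (n i : ℚ) = d * u i := by
  have hdvd : ∀ i, (u i).den ∣ ∏ j, (u j).den := fun i =>
    Finset.dvd_prod_of_mem _ (Finset.mem_univ i)
  choose e he using hdvd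
  refine ⟨∏ j, (u j).den, Finset.prod_pos fun i _ => (u i).den_pos, fun i => e i * (u i).num,
    fun i => ?_⟩
  rw [he i]
  push_cast
  rw [← Rat.mul_den_eq_num]
  ring

namespace Matrix

theorem eq_of_vecMul_eq_zero_of_mulVec_eq_single_sub_single {X R K : Type*} [Fintype X]
    [Fintype R] [CommRing K] [NoZeroDivisors K] [DecidableEq X] {S : Matrix X R K}
    {m : X → K} (hm : m ᵥ* S = 0) {v : R → K} {x y : X} {k : K} (hk : k ≠ 0)
    (hv : S *ᵥ v = Pi.single y k - Pi.single x k) :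
    m x = m y := by
  have h : m ⬝ᵥ (S *ᵥ v) = 0 := by rw [dotProduct_mulVec, hm, zero_dotProduct]
  rw [hv, dotProduct_sub, dotProduct_single, dotProduct_single, ← sub_mul] at h
  exact (sub_eq_zero.1 ((mul_eq_zero.1 h).resolve_right hk)).symm

theorem mem_range_mulVecLin_iff {X R K : Type*} [Fintype X] [Fintype R] [Field K]
    (S : Matrix X R K) (w : X → K) :
    w ∈ LinearMap.range S.mulVecLin ↔ ∀ m : X → K, m ᵥ* S = 0 → m ⬝ᵥ w = 0 := by
  classical
  constructor
  · rintro ⟨u, rfl⟩ m hm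
    rw [mulVecLin_apply, dotProduct_mulVec, hm, zero_dotProduct]
  · intro h
    rw [← Subspace.dualAnnihilator_dualCoannihilator_eq (W := LinearMap.range S.mulVecLin),
      Submodule.mem_dualCoannihilator]
    intro φ hφ
    obtain ⟨m, rfl⟩ := (dotProductEquiv K X).surjective φ
    refine h m (dotProduct_eq_zero _ fun u => ?_)
    rw [← dotProduct_mulVec]
    exact (Submodule.mem_dualAnnihilator _).1 hφ _ (LinearMap.mem_range_self _ u)

theorem exists_mulVec_eq_nat_smul_of_mem_range_map_intCast {X R : Type*} [Fintype R]
    (S : Matrix X R ℤ) (w : X → ℤ)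
    (hw : (fun z => (w z : ℚ)) ∈ LinearMap.range (S.map (Int.cast : ℤ → ℚ)).mulVecLin) :
    ∃ d : ℕ, 0 < d ∧ ∃ v : R → ℤ, S *ᵥ v = (d : ℤ) • w := by
  obtain ⟨u, hu⟩ := hw
  replace hu : S.map (Int.castRingHom ℚ) *ᵥ u = fun z => (w z : ℚ) := hu
  obtain ⟨d, hd, n, hn⟩ := Rat.exists_nat_mul_eq_intCast u
  refine ⟨d, hd, n, funext fun z => Int.cast_injective (α := ℚ) ?_⟩
  have hnu : (Int.castRingHom ℚ ∘ n) = (d : ℚ) • u := funext hn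
  change Int.castRingHom ℚ _ = Int.castRingHom ℚ _
  rw [RingHom.map_mulVec, hnu, mulVec_smul, hu]
  simp

theorem vecMul_map_intCast_eq_zero_of_ratCast {X R K : Type*} [Fintype X] [DivisionRing K]
    [CharZero K] (S : Matrix X R ℤ) {m : X → ℚ} (hm : m ᵥ* S.map (Int.cast : ℤ → ℚ) = 0) :
    (fun z => (m z : K)) ᵥ* S.map (Int.cast : ℤ → K) = 0 := by
  funext r
  have h := RingHom.map_vecMul (Rat.castHom K) (S.map (Int.cast : ℤ → ℚ)) m r
  rw [hm] at h
  simpa [Matrix.map_map, Function.comp_def] using h.symm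

theorem exists_mulVec_eq_single_sub_single {X R : Type*} [Fintype X] [Fintype R]
    [DecidableEq X] (S : Matrix X R ℤ) {x y : X}
    (h : ∀ m : X → ℚ, m ᵥ* S.map (Int.cast : ℤ → ℚ) = 0 → m x = m y) :
    ∃ k : ℕ, 0 < k ∧ ∃ v : R → ℤ, S *ᵥ v = Pi.single y (k : ℤ) - Pi.single x (k : ℤ) := by
  have hrange : (fun z => ((Pi.single y 1 - Pi.single x 1 : X → ℤ) z : ℚ)) ∈
      LinearMap.range (S.map (Int.cast : ℤ → ℚ)).mulVecLin := by
    refine (mem_range_mulVecLin_iff _ _).2 fun m hm => ?_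
    have hcast : (fun z => ((Pi.single y 1 - Pi.single x 1 : X → ℤ) z : ℚ)) =
        Pi.single y 1 - Pi.single x 1 := by
      ext z
      simp only [Pi.sub_apply, Int.cast_sub, Pi.single_apply]
      split_ifs <;> simp
    rw [hcast, dotProduct_sub, dotProduct_single_one, dotProduct_single_one, h m hm, sub_self]
  obtain ⟨k, hk, v, hv⟩ := exists_mulVec_eq_nat_smul_of_mem_range_map_intCast S _ hrange
  refine ⟨k, hk, v, ?_⟩
  rw [hv, smul_sub, ← Pi.single_smul', ← Pi.single_smul', smul_eq_mul, mul_one]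

end Matrix

theorem sf_instance_detects_obligatory_isomers_general
    {X R A : Type*} [Fintype X] [Fintype R] [Fintype A]
    [DecidableEq X]
    (S : Matrix X R ℤ) (M : A → X → ℕ)
    (hker : ∀ a, Matrix.vecMul (fun x => (M a x : ℤ)) S = 0) :
    ((∀ m : X → ℝ,
        (Matrix.vecMul m (S.map (Int.cast : ℤ → ℝ)) = 0 ↔
          ∃ c : A → ℝ, m = fun x => ∑ a, c a * (M a x : ℝ))) →
      ∀ x y : X,
        ((x = y ∨ (x ≠ y ∧ ∃ (k : ℕ) (v : R → ℤ), 0 < k ∧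
            S.mulVec v x = -(k : ℤ) ∧ S.mulVec v y = (k : ℤ) ∧
            ∀ z, z ≠ x → z ≠ y → S.mulVec v z = 0)) ↔
          ∀ a, M a x = M a y)) ∧
    ((∀ m : X → ℝ,
        (∃ c : A → ℝ, m = fun x => ∑ a, c a * (M a x : ℝ)) →
          Matrix.vecMul m (S.map (Int.cast : ℤ → ℝ)) = 0) →
      ∀ x y : X,
        (x = y ∨ (x ≠ y ∧ ∃ (k : ℕ) (v : R → ℤ), 0 < k ∧
            S.mulVec v x = -(k : ℤ) ∧ S.mulVec v y = (k : ℤ) ∧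
            ∀ z, z ≠ x → z ≠ y → S.mulVec v z = 0)) →
          ∀ a, M a x = M a y) := by
  have columns_eq : ∀ x y : X,
      (x = y ∨ (x ≠ y ∧ ∃ (k : ℕ) (v : R → ℤ), 0 < k ∧
          S.mulVec v x = -(k : ℤ) ∧ S.mulVec v y = (k : ℤ) ∧
          ∀ z, z ≠ x → z ≠ y → S.mulVec v z = 0)) →
        ∀ a, M a x = M a y := by
    rintro x y (rfl | ⟨hxy, k, v, hk, hv⟩) a
    · rfl
    · exact_mod_cast eq_of_vecMul_eq_zero_of_mulVec_eq_single_sub_single (hker a)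
        (Nat.cast_ne_zero.2 hk.ne') ((Pi.eq_single_sub_single_iff hxy).2 hv)
  refine ⟨fun hrow x y => ⟨columns_eq x y, fun hcols => ?_⟩, fun _ => columns_eq⟩
  rcases eq_or_ne x y with rfl | hxy
  · exact Or.inl rfl
  have hkernel : ∀ m : X → ℚ, m ᵥ* S.map (Int.cast : ℤ → ℚ) = 0 → m x = m y := by
    intro m hm
    obtain ⟨c, hc⟩ := (hrow _).1 (vecMul_map_intCast_eq_zero_of_ratCast (K := ℝ) S hm)
    have hx := congrFun hc x
    have hy := congrFun hc y
    simp only [hcols] at hx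
    exact_mod_cast hx.trans hy.symm
  obtain ⟨k, hk, v, hv⟩ := exists_mulVec_eq_single_sub_single S hkernel
  exact Or.inr ⟨hxy, k, v, hk, (Pi.eq_single_sub_single_iff hxy).1 hv⟩

/-- For a sum-formula instance `A` of a RN with stoichiometric
matrix `S`: if `im Aᵀ = ker Sᵀ`, then `x ⇌ y` iff the columns of `A` at `x`
and `y` coincide; if only `im Aᵀ ⊆ ker Sᵀ`, then `x ⇌ y` implies equal
columns. -/
theorem sf_instance_detects_obligatory_isomers
    {X R A : Type*} [Fintype X] [Fintype R] [Fintype A] [Nonempty A]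
    [DecidableEq X]
    (S : Matrix X R ℤ) (M : A → X → ℕ)
    (hcol : ∀ x, ∃ a, M a x ≠ 0)
    (hker : ∀ a, Matrix.vecMul (fun x => (M a x : ℤ)) S = 0) :
    ((∀ m : X → ℝ,
        (Matrix.vecMul m (S.map (Int.cast : ℤ → ℝ)) = 0 ↔
          ∃ c : A → ℝ, m = fun x => ∑ a, c a * (M a x : ℝ))) →
      ∀ x y : X,
        ((x = y ∨ (x ≠ y ∧ ∃ (k : ℕ) (v : R → ℤ), 0 < k ∧
            S.mulVec v x = -(k : ℤ) ∧ S.mulVec v y = (k : ℤ) ∧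
            ∀ z, z ≠ x → z ≠ y → S.mulVec v z = 0)) ↔
          ∀ a, M a x = M a y)) ∧
    ((∀ m : X → ℝ,
        (∃ c : A → ℝ, m = fun x => ∑ a, c a * (M a x : ℝ)) →
          Matrix.vecMul m (S.map (Int.cast : ℤ → ℝ)) = 0) →
      ∀ x y : X,
        (x = y ∨ (x ≠ y ∧ ∃ (k : ℕ) (v : R → ℤ), 0 < k ∧
            S.mulVec v x = -(k : ℤ) ∧ S.mulVec v y = (k : ℤ) ∧
            ∀ z, z ≠ x → z ≠ y → S.mulVec v z = 0)) →
          ∀ a, M a x = M a y) :=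
  sf_instance_detects_obligatory_isomers_general S M hker
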